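/- Let λ > 0 and r > 0, and let x, y, z, t > 0 satisfy |x − y| ≥ r and |z − x| ≤ 3r. Then P_t(x,y) ≤ 16^{λ+1} P_t(z,y). -/

import Mathlib

open MeasureTheory Set ENNReal

/-- The Bessel Poisson kernel given by Weinstein's formula. -/
noncomputable def PK (lam t x y : ℝ) : ℝ :=
  (2 * lam * t / Real.pi) *
    ∫ θ in Set.Ioo (0 : ℝ) Real.pi,
      Real.sin θ ^ (2 * lam - 1) *
        (x ^ 2 + y ^ 2 + t ^ 2 - 2 * x * y * Real.cos θ) ^ (-(lam + 1))

/-- The Poisson extension `P_σ f (x, t)` of a nonnegative function on `ℝ₊`. -/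
noncomputable def Pfwd (lam : ℝ) (σ : Measure ℝ) (f : ℝ → ℝ≥0∞) (x t : ℝ) : ℝ≥0∞ :=
  ∫⁻ y in Set.Ioi (0 : ℝ), ENNReal.ofReal (PK lam t x y) * f y ∂σ

/-- The adjoint operator `P*_μ g (y)` of a nonnegative function on `ℝ²₊₊`. -/
noncomputable def Padj (lam : ℝ) (μ : Measure (ℝ × ℝ)) (g : ℝ × ℝ → ℝ≥0∞) (y : ℝ) : ℝ≥0∞ :=
  ∫⁻ p in Set.Ioi (0 : ℝ) ×ˢ Set.Ioi (0 : ℝ), ENNReal.ofReal (PK lam p.2 p.1 y) * g p ∂μ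

/-- The triple `3I` of the interval `I = (a, b)`, intersected with `ℝ₊`. -/
def tri (a b : ℝ) : Set ℝ :=
  Set.Ioo ((a + b) / 2 - 3 * (b - a) / 2) ((a + b) / 2 + 3 * (b - a) / 2) ∩ Set.Ioi 0

/-- The Carleson box `Î = I × [0, |I|]` of the interval `I = (a, b)`. -/
def boxI (a b : ℝ) : Set (ℝ × ℝ) := Set.Ioo a b ×ˢ Set.Icc 0 (b - a)

/-- The enlarged box `3Î = 3I × [0, 3|I|]` of the interval `I = (a, b)`. -/
def boxI3 (a b : ℝ) : Set (ℝ × ℝ) := tri a b ×ˢ Set.Icc 0 (3 * (b - a))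

/-- The two-weight norm inequality for the Bessel Poisson operator with constant `N`,
for nonnegative `f ∈ L²(ℝ₊; σ)`. -/
def NormIneq (lam : ℝ) (σ : Measure ℝ) (μ : Measure (ℝ × ℝ)) (N : ℝ≥0∞) : Prop :=
  ∀ f : ℝ → ℝ≥0∞, Measurable f → (∫⁻ y in Set.Ioi (0 : ℝ), f y ^ 2 ∂σ) < ∞ →
    (∫⁻ p in Set.Ioi (0 : ℝ) ×ˢ Set.Ioi (0 : ℝ), Pfwd lam σ f p.1 p.2 ^ 2 ∂μ)
      ≤ N ^ 2 * ∫⁻ y in Set.Ioi (0 : ℝ), f y ^ 2 ∂σ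

/-- The dual two-weight norm inequality with constant `N`, for nonnegative
`g ∈ L²(ℝ²₊₊; μ)`. -/
def DualNormIneq (lam : ℝ) (σ : Measure ℝ) (μ : Measure (ℝ × ℝ)) (N : ℝ≥0∞) : Prop :=
  ∀ g : ℝ × ℝ → ℝ≥0∞, Measurable g →
    (∫⁻ p in Set.Ioi (0 : ℝ) ×ˢ Set.Ioi (0 : ℝ), g p ^ 2 ∂μ) < ∞ →
    (∫⁻ y in Set.Ioi (0 : ℝ), Padj lam μ g y ^ 2 ∂σ)
      ≤ N ^ 2 * ∫⁻ p in Set.Ioi (0 : ℝ) ×ˢ Set.Ioi (0 : ℝ), g p ^ 2 ∂μ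

/-- The forward testing condition with constant `F`:
`∫_{3Î} (P_σ 1_I)² dμ ≤ F² σ(I)` for every bounded interval `I ⊂ ℝ₊`. -/
def FwdTesting (lam : ℝ) (σ : Measure ℝ) (μ : Measure (ℝ × ℝ)) (F : ℝ≥0∞) : Prop :=
  ∀ a b : ℝ, 0 ≤ a → a < b →
    (∫⁻ p in boxI3 a b, Pfwd lam σ ((Set.Ioo a b).indicator 1) p.1 p.2 ^ 2 ∂μ)
      ≤ F ^ 2 * σ (Set.Ioo a b)

/-- The backward testing condition with constant `B`:
`∫_{3I} (P*_μ (t 1_Î))² dσ ≤ B² ∫_Î t² dμ` for every bounded interval `I ⊂ ℝ₊`. -/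
def BwdTesting (lam : ℝ) (σ : Measure ℝ) (μ : Measure (ℝ × ℝ)) (B : ℝ≥0∞) : Prop :=
  ∀ a b : ℝ, 0 ≤ a → a < b →
    (∫⁻ y in tri a b,
        Padj lam μ ((boxI a b).indicator fun p => ENNReal.ofReal p.2) y ^ 2 ∂σ)
      ≤ B ^ 2 * ∫⁻ p in boxI a b, ENNReal.ofReal p.2 ^ 2 ∂μ

/-!
The denominator in Weinstein's formula is `|x - y e^{iθ}|² + t²`. Since `xy ≥ 0`, the distance
`|x - y e^{iθ}|` is at least `|x - y| ≥ r ≥ |z - x| / 3`, so by the triangle inequality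
`|z - y e^{iθ}| ≤ 4 |x - y e^{iθ}|`. Hence the denominators at `z` and `x` differ by a factor of at
most `16`, and raising to the power `-(λ + 1)` compares the integrands pointwise with constant
`16^(λ+1)`.
-/

open Real

lemma intervalIntegrable_sin_rpow_zero_halfPi {p : ℝ} (hp : -1 < p) :
    IntervalIntegrable (fun θ => sin θ ^ p) volume 0 (π / 2) := by
  -- Jordan's inequality `2θ/π ≤ sin θ` controls the singularity at `0` when `p < 0`.
  have hdom : IntervalIntegrable (fun θ => (2 / π) ^ p * θ ^ p + 1) volume 0 (π / 2) :=
    ((intervalIntegral.intervalIntegrable_rpow' hp).const_mul _).add intervalIntegrable_const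
  refine hdom.mono_fun' (measurable_sin.pow_const p).aestronglyMeasurable ?_
  rw [uIoc_of_le (by positivity)]
  filter_upwards [ae_restrict_mem measurableSet_Ioc] with θ ⟨hθ₀, hθ⟩
  have hsin : 0 < sin θ := sin_pos_of_pos_of_lt_pi hθ₀ (by linarith [pi_pos])
  have hpow : 0 ≤ (2 / π) ^ p * θ ^ p := by positivity
  rw [norm_of_nonneg (rpow_nonneg hsin.le p)]
  rcases le_or_gt 0 p with hp₀ | hp₀
  · linarith [rpow_le_one hsin.le (sin_le_one θ) hp₀]
  · calc sin θ ^ p ≤ (2 / π * θ) ^ p :=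
          rpow_le_rpow_of_nonpos (by positivity) (mul_le_sin hθ₀.le hθ) hp₀.le
      _ = (2 / π) ^ p * θ ^ p := mul_rpow (by positivity) hθ₀.le
      _ ≤ (2 / π) ^ p * θ ^ p + 1 := by linarith

lemma integrableOn_sin_rpow {p : ℝ} (hp : -1 < p) :
    IntegrableOn (fun θ => sin θ ^ p) (Ioo 0 π) := by
  have hleft := intervalIntegrable_sin_rpow_zero_halfPi hp
  have hright : IntervalIntegrable (fun θ => sin θ ^ p) volume (π / 2) π := by
    have h := (hleft.comp_sub_left π).symm
    rw [sub_zero, show π - π / 2 = π / 2 by ring] at h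
    simpa only [sin_pi_sub] using h
  exact (hleft.trans hright).1.mono_set Ioo_subset_Ioc_self

lemma norm_ofReal_sub_mul_exp_sq (x y θ : ℝ) :
    ‖(x : ℂ) - y * Complex.exp (θ * Complex.I)‖ ^ 2 = x ^ 2 + y ^ 2 - 2 * x * y * cos θ := by
  rw [← Complex.normSq_eq_norm_sq, Complex.normSq_apply]
  simp only [Complex.sub_re, Complex.sub_im, Complex.mul_re, Complex.mul_im,
    Complex.ofReal_re, Complex.ofReal_im, Complex.exp_ofReal_mul_I_re,
    Complex.exp_ofReal_mul_I_im]
  linear_combination y ^ 2 * sin_sq_add_cos_sq θ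

lemma cosine_form_nonneg (x y θ : ℝ) : 0 ≤ x ^ 2 + y ^ 2 - 2 * x * y * cos θ := by
  rw [← norm_ofReal_sub_mul_exp_sq]
  positivity

lemma cosine_form_le_of_abs_sub_le {k x y z : ℝ} (θ : ℝ) (hk : 0 ≤ k) (hxy : 0 ≤ x * y)
    (hzx : |z - x| ≤ k * |x - y|) :
    z ^ 2 + y ^ 2 - 2 * z * y * cos θ ≤ (k + 1) ^ 2 * (x ^ 2 + y ^ 2 - 2 * x * y * cos θ) := by
  set w : ℂ := y * Complex.exp (θ * Complex.I)
  have hxw : |x - y| ≤ ‖(x : ℂ) - w‖ := by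
    refine (sq_le_sq₀ (abs_nonneg _) (norm_nonneg _)).1 ?_
    rw [sq_abs, norm_ofReal_sub_mul_exp_sq]
    nlinarith [cos_le_one θ]
  have hzw : ‖(z : ℂ) - w‖ ≤ (k + 1) * ‖(x : ℂ) - w‖ :=
    calc ‖(z : ℂ) - w‖ ≤ ‖(z : ℂ) - x‖ + ‖(x : ℂ) - w‖ :=
          norm_sub_le_norm_sub_add_norm_sub _ _ _
      _ = |z - x| + ‖(x : ℂ) - w‖ := by rw [← Complex.ofReal_sub, Complex.norm_real, norm_eq_abs]
      _ ≤ k * ‖(x : ℂ) - w‖ + ‖(x : ℂ) - w‖ := by gcongr; exact hzx.trans (by gcongr)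
      _ = (k + 1) * ‖(x : ℂ) - w‖ := by ring
  rw [← norm_ofReal_sub_mul_exp_sq, ← norm_ofReal_sub_mul_exp_sq, ← mul_pow]
  gcongr

lemma rpow_neg_le_mul_rpow_neg_of_le_mul {a b C q : ℝ} (ha : 0 < a) (hb : 0 < b) (hq : 0 ≤ q)
    (h : b ≤ C * a) : a ^ (-q) ≤ C ^ q * b ^ (-q) := by
  have hC : 0 < C := pos_of_mul_pos_left (hb.trans_le h) ha.le
  calc a ^ (-q) = C ^ q * (C * a) ^ (-q) := by
        rw [mul_rpow hC.le ha.le, rpow_neg hC.le, ← mul_assoc, mul_inv_cancel₀ (by positivity),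
          one_mul]
    _ ≤ C ^ q * b ^ (-q) :=
        mul_le_mul_of_nonneg_left (rpow_le_rpow_of_nonpos hb h (neg_nonpos.2 hq)) (by positivity)

noncomputable def weinsteinIntegrand (lam t x y θ : ℝ) : ℝ :=
  sin θ ^ (2 * lam - 1) * (x ^ 2 + y ^ 2 + t ^ 2 - 2 * x * y * cos θ) ^ (-(lam + 1))

lemma PK_eq_integral_weinsteinIntegrand (lam t x y : ℝ) :
    PK lam t x y = 2 * lam * t / π * ∫ θ in Ioo 0 π, weinsteinIntegrand lam t x y θ :=
  rfl

lemma sq_le_weinstein_denom (t x y θ : ℝ) :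
    t ^ 2 ≤ x ^ 2 + y ^ 2 + t ^ 2 - 2 * x * y * cos θ := by
  linarith [cosine_form_nonneg x y θ]

section weinsteinIntegrand

variable {lam k t x y z θ : ℝ}

lemma weinsteinIntegrand_nonneg (hθ : θ ∈ Icc 0 π) : 0 ≤ weinsteinIntegrand lam t x y θ :=
  mul_nonneg (rpow_nonneg (sin_nonneg_of_nonneg_of_le_pi hθ.1 hθ.2) _)
    (rpow_nonneg ((sq_nonneg t).trans (sq_le_weinstein_denom t x y θ)) _)

lemma integrableOn_weinsteinIntegrand (hlam : 0 < lam) (ht : t ≠ 0) :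
    IntegrableOn (weinsteinIntegrand lam t x y) (Ioo 0 π) := by
  refine ((integrableOn_sin_rpow (p := 2 * lam - 1) (by linarith)).const_mul
    ((t ^ 2) ^ (-(lam + 1)))).mono' (by unfold weinsteinIntegrand; fun_prop) ?_
  filter_upwards [ae_restrict_mem measurableSet_Ioo] with θ hθ
  rw [norm_of_nonneg (weinsteinIntegrand_nonneg (Ioo_subset_Icc_self hθ)), mul_comm,
    weinsteinIntegrand]
  exact mul_le_mul_of_nonneg_left
    (rpow_le_rpow_of_nonpos (by positivity) (sq_le_weinstein_denom t x y θ) (by linarith))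
    (rpow_nonneg (sin_nonneg_of_nonneg_of_le_pi hθ.1.le hθ.2.le) _)

lemma weinsteinIntegrand_le_of_abs_sub_le (hlam : -1 ≤ lam) (ht : t ≠ 0) (hk : 0 ≤ k)
    (hxy : 0 ≤ x * y) (hzx : |z - x| ≤ k * |x - y|) (hθ : θ ∈ Icc 0 π) :
    weinsteinIntegrand lam t x y θ ≤
      ((k + 1) ^ 2) ^ (lam + 1) * weinsteinIntegrand lam t z y θ := by
  have hdenom := rpow_neg_le_mul_rpow_neg_of_le_mul (C := (k + 1) ^ 2) (q := lam + 1)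
    ((sq_pos_of_ne_zero ht).trans_le (sq_le_weinstein_denom t x y θ))
    ((sq_pos_of_ne_zero ht).trans_le (sq_le_weinstein_denom t z y θ)) (by linarith)
    (by nlinarith [cosine_form_le_of_abs_sub_le θ hk hxy hzx, sq_nonneg k])
  calc weinsteinIntegrand lam t x y θ
      ≤ sin θ ^ (2 * lam - 1) * (((k + 1) ^ 2) ^ (lam + 1) *
          (z ^ 2 + y ^ 2 + t ^ 2 - 2 * z * y * cos θ) ^ (-(lam + 1))) :=
        mul_le_mul_of_nonneg_left hdenom
          (rpow_nonneg (sin_nonneg_of_nonneg_of_le_pi hθ.1 hθ.2) _)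
    _ = ((k + 1) ^ 2) ^ (lam + 1) * weinsteinIntegrand lam t z y θ := by
        rw [weinsteinIntegrand]; ring

theorem PK_le_rpow_mul_PK_of_abs_sub_le (hlam : 0 < lam) (ht : 0 < t) (hk : 0 ≤ k)
    (hxy : 0 ≤ x * y) (hzx : |z - x| ≤ k * |x - y|) :
    PK lam t x y ≤ ((k + 1) ^ 2) ^ (lam + 1) * PK lam t z y := by
  rw [PK_eq_integral_weinsteinIntegrand, PK_eq_integral_weinsteinIntegrand, mul_left_comm,
    ← integral_const_mul (((k + 1) ^ 2) ^ (lam + 1))]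
  refine mul_le_mul_of_nonneg_left (integral_mono_of_nonneg ?_ ?_ ?_) (by positivity)
  · filter_upwards [ae_restrict_mem measurableSet_Ioo] with θ hθ
    exact weinsteinIntegrand_nonneg (Ioo_subset_Icc_self hθ)
  · exact (integrableOn_weinsteinIntegrand hlam ht.ne').const_mul _
  · filter_upwards [ae_restrict_mem measurableSet_Ioo] with θ hθ
    exact weinsteinIntegrand_le_of_abs_sub_le (by linarith) ht.ne' hk hxy hzx
      (Ioo_subset_Icc_self hθ)

end weinsteinIntegrand

theorem bessel_poisson_kernel_comparison_far_general (lam : ℝ) (hlam : 0 < lam)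
    (r x y z t : ℝ) (hx : 0 < x) (hy : 0 < y) (ht : 0 < t)
    (hxy : r ≤ |x - y|) (hzx : |z - x| ≤ 3 * r) :
    PK lam t x y ≤ (16 : ℝ) ^ (lam + 1) * PK lam t z y := by
  have hcomp := PK_le_rpow_mul_PK_of_abs_sub_le hlam ht (by norm_num : (0 : ℝ) ≤ 3)
    (mul_pos hx hy).le (hzx.trans (by linarith))
  norm_num at hcomp
  exact hcomp

/-- Kernel comparison: if `|x − y| ≥ r` and `|z − x| ≤ 3r`, then
`P_t(x, y) ≤ 16^{λ+1} P_t(z, y)`. -/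
theorem bessel_poisson_kernel_comparison_far (lam : ℝ) (hlam : 0 < lam)
    (r x y z t : ℝ) (hr : 0 < r) (hx : 0 < x) (hy : 0 < y) (hz : 0 < z) (ht : 0 < t)
    (hxy : r ≤ |x - y|) (hzx : |z - x| ≤ 3 * r) :
    PK lam t x y ≤ (16 : ℝ) ^ (lam + 1) * PK lam t z y :=
  bessel_poisson_kernel_comparison_far_general lam hlam r x y z t hx hy ht hxy hzx
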